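/- arXiv:1806.07949 — 3 statements merged into one kernel-verified Lean document; each statement's English description precedes it below -/
import Mathlib

section
/- The series ∑_{m=0}^∞ a/((m+1)(m+a)) with a = 7/6 equals 7·(6 − log 12 − √3·π/2 − log √3). -/
open Real

noncomputable def Fant (t : ℝ) : ℝ :=
  42*t - 14*Real.log (t+1) - 21/2*Real.log (t^2+t+1) - 7/2*Real.log (t^2-t+1)
  - 7*Real.sqrt 3 * Real.arctan ((2*t+1)/Real.sqrt 3)
  - 7*Real.sqrt 3 * Real.arctan ((2*t-1)/Real.sqrt 3)

lemma den_ge {t : ℝ} (ht : 0 ≤ t) : (1:ℝ) ≤ t^5+t^4+t^3+t^2+t+1 := by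
  have h5 : 0 ≤ t^5 := pow_nonneg ht 5
  have h4 : 0 ≤ t^4 := pow_nonneg ht 4
  have h3 : 0 ≤ t^3 := pow_nonneg ht 3
  have h2 : 0 ≤ t^2 := pow_nonneg ht 2
  linarith

lemma hasDerivFant {t : ℝ} (ht : 0 ≤ t) :
    HasDerivAt Fant (42*t^5/(t^5+t^4+t^3+t^2+t+1)) t := by
  have h3 : (0:ℝ) < Real.sqrt 3 := Real.sqrt_pos.2 (by norm_num)
  have hs3 : Real.sqrt 3 * Real.sqrt 3 = 3 := Real.mul_self_sqrt (by norm_num)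
  have h1 : (0:ℝ) < t + 1 := by linarith
  have hq1 : (0:ℝ) < t^2+t+1 := by positivity
  have hq2 : (0:ℝ) < t^2-t+1 := by nlinarith [sq_nonneg (t-1)]
  have hden : (0:ℝ) < t^5+t^4+t^3+t^2+t+1 := lt_of_lt_of_le one_pos (den_ge ht)
  have d1 : HasDerivAt (fun t : ℝ => 42*t) 42 t := by
    simpa using (hasDerivAt_id t).const_mul (42:ℝ)
  have d2 : HasDerivAt (fun t : ℝ => 14*Real.log (t+1)) (14*(1/(t+1))) t := by
    have := ((hasDerivAt_id t).add_const 1).log (by positivity)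
    simpa using this.const_mul (14:ℝ)
  have d3 : HasDerivAt (fun t : ℝ => 21/2*Real.log (t^2+t+1)) (21/2*((2*t+1)/(t^2+t+1))) t := by
    have hp : HasDerivAt (fun t : ℝ => t^2+t+1) (2*t+1) t := by
      have := ((hasDerivAt_pow 2 t).add (hasDerivAt_id t)).add_const 1
      simpa using this
    simpa using (hp.log (ne_of_gt hq1)).const_mul (21/2:ℝ)
  have d4 : HasDerivAt (fun t : ℝ => 7/2*Real.log (t^2-t+1)) (7/2*((2*t-1)/(t^2-t+1))) t := by
    have hp : HasDerivAt (fun t : ℝ => t^2-t+1) (2*t-1) t := by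
      have := ((hasDerivAt_pow 2 t).sub (hasDerivAt_id t)).add_const 1
      simpa using this
    simpa using (hp.log (ne_of_gt hq2)).const_mul (7/2:ℝ)
  have d5 : HasDerivAt (fun t : ℝ => 7*Real.sqrt 3 * Real.arctan ((2*t+1)/Real.sqrt 3))
      (7*Real.sqrt 3 * ((2/Real.sqrt 3)/(1+((2*t+1)/Real.sqrt 3)^2))) t := by
    have hin : HasDerivAt (fun t : ℝ => (2*t+1)/Real.sqrt 3) (2/Real.sqrt 3) t := by
      have := (((hasDerivAt_id t).const_mul (2:ℝ)).add_const 1).div_const (Real.sqrt 3)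
      simpa using this
    have := (Real.hasDerivAt_arctan ((2*t+1)/Real.sqrt 3)).comp t hin
    simpa [mul_comm, mul_div_assoc, div_eq_mul_inv] using this.const_mul (7*Real.sqrt 3)
  have d6 : HasDerivAt (fun t : ℝ => 7*Real.sqrt 3 * Real.arctan ((2*t-1)/Real.sqrt 3))
      (7*Real.sqrt 3 * ((2/Real.sqrt 3)/(1+((2*t-1)/Real.sqrt 3)^2))) t := by
    have hin : HasDerivAt (fun t : ℝ => (2*t-1)/Real.sqrt 3) (2/Real.sqrt 3) t := by
      have := (((hasDerivAt_id t).const_mul (2:ℝ)).sub_const 1).div_const (Real.sqrt 3)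
      simpa using this
    have := (Real.hasDerivAt_arctan ((2*t-1)/Real.sqrt 3)).comp t hin
    simpa [mul_comm, mul_div_assoc, div_eq_mul_inv] using this.const_mul (7*Real.sqrt 3)
  have D := ((((d1.sub d2).sub d3).sub d4).sub d5).sub d6
  convert D using 1
  · rfl
  · rfl
  · rfl
  have hsq : Real.sqrt 3 ^ 2 = 3 := Real.sq_sqrt (by norm_num)
  rw [div_pow, div_pow, hsq]
  have ha : (0:ℝ) < 1 + (2*t+1)^2/3 := by positivity
  have hb : (0:ℝ) < 1 + (2*t-1)^2/3 := by positivity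
  have hq2' : t*(t-1)+1 ≠ 0 := by nlinarith [sq_nonneg (t-1)]
  field_simp
  nlinarith [hs3, sq_nonneg t, sq_nonneg (t+1)]

lemma contOn_pow_div (k : ℕ) : ContinuousOn (fun t : ℝ => 42*t^k/(t^5+t^4+t^3+t^2+t+1)) (Set.uIcc 0 1) := by
  apply ContinuousOn.div
  · fun_prop
  · fun_prop
  · intro t ht
    rw [Set.uIcc_of_le (by norm_num : (0:ℝ) ≤ 1)] at ht
    exact ne_of_gt (lt_of_lt_of_le one_pos (den_ge ht.1))

lemma integral_main : ∫ t in (0:ℝ)..1, 42*t^5/(t^5+t^4+t^3+t^2+t+1)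
    = 42 - 14*Real.log 2 - 21/2*Real.log 3 - 7*Real.sqrt 3*Real.pi/2 := by
  have h := intervalIntegral.integral_eq_sub_of_hasDerivAt
    (f := Fant) (f' := fun t => 42*t^5/(t^5+t^4+t^3+t^2+t+1)) (a := 0) (b := 1)
    (fun t ht => hasDerivFant (by rw [Set.uIcc_of_le (by norm_num : (0:ℝ) ≤ 1)] at ht; exact ht.1))
    ((contOn_pow_div 5).intervalIntegrable)
  rw [h]
  have h3 : (0:ℝ) < Real.sqrt 3 := Real.sqrt_pos.2 (by norm_num)
  have hs3 : Real.sqrt 3 * Real.sqrt 3 = 3 := Real.mul_self_sqrt (by norm_num)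
  have e1 : (2*(1:ℝ)+1)/Real.sqrt 3 = Real.sqrt 3 := by
    rw [eq_comm, eq_div_iff (ne_of_gt h3)]; norm_num [hs3]
  have e2 : (2*(1:ℝ)-1)/Real.sqrt 3 = (Real.sqrt 3)⁻¹ := by norm_num [one_div]
  have e3 : (2*(0:ℝ)+1)/Real.sqrt 3 = (Real.sqrt 3)⁻¹ := by norm_num [one_div]
  have e4 : (2*(0:ℝ)-1)/Real.sqrt 3 = -(Real.sqrt 3)⁻¹ := by
    rw [show (2*(0:ℝ)-1) = -1 by norm_num, neg_div, one_div]
  have harc : Real.arctan (Real.sqrt 3)⁻¹ = Real.pi/2 - Real.arctan (Real.sqrt 3) :=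
    Real.arctan_inv_of_pos h3
  rw [Fant, Fant, e1, e2, e3, e4]
  norm_num [Real.arctan_neg, harc]
  ring

lemma term_integral (m : ℕ) :
    (7/6 : ℝ) / ((m + 1) * (m + (7/6 : ℝ))) = ∫ t in (0:ℝ)..1, 42*(t^(6*m+5) - t^(6*m+6)) := by
  rw [intervalIntegral.integral_const_mul, intervalIntegral.integral_sub
    (intervalIntegral.intervalIntegrable_pow _) (intervalIntegral.intervalIntegrable_pow _),
    integral_pow, integral_pow]
  have h1 : ((m:ℝ)+1) ≠ 0 := by positivity
  have h2 : ((m:ℝ)+7/6) ≠ 0 := by positivity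
  have h3 : ((6*m:ℝ)+5+1) ≠ 0 := by positivity
  have h4 : ((6*m:ℝ)+6+1) ≠ 0 := by positivity
  push_cast
  field_simp
  ring

lemma key_poly (t : ℝ) (N : ℕ) :
    (∑ m ∈ Finset.range N, (t^(6*m+5) - t^(6*m+6))) * (t^5+t^4+t^3+t^2+t+1)
      = t^5 - t^(6*N+5) := by
  induction N with
  | zero => simp
  | succ n ih =>
    rw [Finset.sum_range_succ, add_mul, ih,
      show 6*(n+1)+5 = (6*n+5)+6 by ring, show 6*n+6 = (6*n+5)+1 by ring, pow_add, pow_add]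
    ring

lemma partial_sum_eq (N : ℕ) :
    ∑ m ∈ Finset.range N, (7/6:ℝ)/((m+1)*(m+7/6))
      = (∫ t in (0:ℝ)..1, 42*t^5/(t^5+t^4+t^3+t^2+t+1))
        - ∫ t in (0:ℝ)..1, 42*t^(6*N+5)/(t^5+t^4+t^3+t^2+t+1) := by
  have h := fun m => term_integral m
  simp_rw [h]
  rw [← intervalIntegral.integral_finset_sum (fun m _ =>
    ((intervalIntegral.intervalIntegrable_pow _).sub
      (intervalIntegral.intervalIntegrable_pow _)).const_mul 42),
    ← intervalIntegral.integral_sub ((contOn_pow_div 5).intervalIntegrable)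
      ((contOn_pow_div (6*N+5)).intervalIntegrable)]
  apply intervalIntegral.integral_congr
  intro t ht
  rw [Set.uIcc_of_le (by norm_num : (0:ℝ) ≤ 1)] at ht
  have hden : (t^5+t^4+t^3+t^2+t+1) ≠ 0 := ne_of_gt (lt_of_lt_of_le one_pos (den_ge ht.1))
  show ∑ m ∈ Finset.range N, 42*(t^(6*m+5) - t^(6*m+6))
      = 42*t^5/(t^5+t^4+t^3+t^2+t+1) - 42*t^(6*N+5)/(t^5+t^4+t^3+t^2+t+1)
  rw [div_sub_div_same, eq_div_iff hden, ← Finset.mul_sum, mul_assoc, key_poly]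
  ring

lemma remainder_bound (N : ℕ) :
    |∫ t in (0:ℝ)..1, 42*t^(6*N+5)/(t^5+t^4+t^3+t^2+t+1)| ≤ (42:ℝ)/(6*N+6) := by
  have hnn : (0:ℝ) ≤ ∫ t in (0:ℝ)..1, 42*t^(6*N+5)/(t^5+t^4+t^3+t^2+t+1) := by
    apply intervalIntegral.integral_nonneg (by norm_num : (0:ℝ) ≤ 1)
    intro t ht
    have h0 : (0:ℝ) ≤ t := ht.1
    exact div_nonneg (mul_nonneg (by norm_num) (pow_nonneg h0 _)) (by linarith [den_ge h0])
  rw [abs_of_nonneg hnn]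
  have hle : (∫ t in (0:ℝ)..1, 42*t^(6*N+5)/(t^5+t^4+t^3+t^2+t+1))
      ≤ ∫ t in (0:ℝ)..1, 42*t^(6*N+5) := by
    apply intervalIntegral.integral_mono_on (by norm_num)
      ((contOn_pow_div (6*N+5)).intervalIntegrable)
      ((intervalIntegral.intervalIntegrable_pow _).const_mul 42)
    intro t ht
    have h1 : (0:ℝ) ≤ 42*t^(6*N+5) := mul_nonneg (by norm_num) (pow_nonneg ht.1 _)
    exact div_le_self h1 (den_ge ht.1)
  refine hle.trans ?_
  rw [intervalIntegral.integral_const_mul, integral_pow, one_pow,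
    zero_pow (by omega : 6*N+5+1 ≠ 0)]
  push_cast
  rw [show (6*(N:ℝ)+5+1) = 6*N+6 by ring, sub_zero, mul_one_div]

theorem stmt_6 :
    (∑' m : ℕ, (7/6 : ℝ) / ((m + 1) * (m + (7/6 : ℝ)))) = 7 * (6 - Real.log 12 - Real.sqrt 3 * Real.pi / 2 - Real.log (Real.sqrt 3)) := by
  have hsum : HasSum (fun m : ℕ => (7/6:ℝ)/((m+1)*(m+7/6)))
      (42 - 14*Real.log 2 - 21/2*Real.log 3 - 7*Real.sqrt 3*Real.pi/2) := by
    rw [hasSum_iff_tendsto_nat_of_nonneg (fun m => by positivity)]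
    have hR : Filter.Tendsto (fun N : ℕ =>
        ∫ t in (0:ℝ)..1, 42*t^(6*N+5)/(t^5+t^4+t^3+t^2+t+1)) Filter.atTop (nhds 0) := by
      apply squeeze_zero_norm (fun N => remainder_bound N)
      apply Filter.Tendsto.div_atTop (tendsto_const_nhds)
      apply Filter.tendsto_atTop_add_const_right
      exact (tendsto_natCast_atTop_atTop (R := ℝ)).const_mul_atTop (by norm_num)
    have h1 : Filter.Tendsto (fun N : ℕ =>
        (∫ t in (0:ℝ)..1, 42*t^5/(t^5+t^4+t^3+t^2+t+1))
          - ∫ t in (0:ℝ)..1, 42*t^(6*N+5)/(t^5+t^4+t^3+t^2+t+1)) Filter.atTop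
        (nhds ((∫ t in (0:ℝ)..1, 42*t^5/(t^5+t^4+t^3+t^2+t+1)) - 0)) :=
      Filter.Tendsto.sub tendsto_const_nhds hR
    rw [integral_main, sub_zero] at h1
    exact h1.congr (fun N => by rw [partial_sum_eq, integral_main])
  rw [hsum.tsum_eq]
  have hlog12 : Real.log 12 = 2*Real.log 2 + Real.log 3 := by
    rw [show (12:ℝ) = 2^2*3 by norm_num, Real.log_mul (by norm_num) (by norm_num), Real.log_pow]
    push_cast; ring
  have hlogs : Real.log (Real.sqrt 3) = Real.log 3 / 2 := Real.log_sqrt (by norm_num)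
  rw [hlog12, hlogs]; ring
end

section
/- The series ∑_{m=0}^∞ a/((m+1)(m+a)) with a = 8/5 equals (8/3)·(5/3 − log 10 + ((√5−1)/√(10+2√5))·π/2 + (1/2)·(√5·log((√5+1)/2) − log(√5/4))). -/
open Real MeasureTheory

-- atoms
lemma quad_pos (α t : ℝ) (hd : α^2 < 4) : 0 < t^2 + α*t + 1 := by nlinarith [sq_nonneg (2*t+α)]

lemma hasDerivAt_logq (α : ℝ) (hd : α^2 < 4) (t : ℝ) :
    HasDerivAt (fun u => Real.log (u^2 + α*u + 1)) ((2*t+α)/(t^2+α*t+1)) t := by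
  have hq := quad_pos α t hd
  have h1 : HasDerivAt (fun u : ℝ => u^2 + α*u + 1) (2*t+α) t := by
    have := ((hasDerivAt_pow 2 t).add ((hasDerivAt_id t).const_mul α)).add_const 1
    simpa [mul_comm] using this
  have := (Real.hasDerivAt_log hq.ne').comp t h1
  simpa [div_eq_inv_mul, Function.comp_def] using this

lemma hasDerivAt_atq (α s : ℝ) (hs : 0 < s) (hss : s^2 = 4 - α^2) (t : ℝ) :
    HasDerivAt (fun u => Real.arctan ((2*u+α)/s)) (s/(2*(t^2+α*t+1))) t := by
  have hq : 0 < t^2 + α*t + 1 := by nlinarith [sq_nonneg (2*t+α)]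
  have h1 : HasDerivAt (fun u : ℝ => (2*u+α)/s) (2/s) t := by
    have := (((hasDerivAt_id t).const_mul 2).add_const α).div_const s
    simpa [mul_comm] using this
  have := h1.arctan
  convert this using 1
  have h2 : 1 + ((2*t+α)/s)^2 = 4*(t^2+α*t+1)/s^2 := by
    field_simp
    ring_nf
    nlinarith [hss]
  rw [h2]
  field_simp
  ring

lemma frac_eq (t r q1 q2 : ℝ) (hr : r^2 = 5) (hq1 : q1 = t^2+((1+r)/2)*t+1) (hq2 : q2 = t^2+((1-r)/2)*t+1)
    (h1 : 0 < q1) (h2 : 0 < q2) :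
    ((5-r)/4)*((2*t+(1+r)/2)/q1) + ((5+r)/4)*((2*t+(1-r)/2)/q2) + r/(2*q1) - r/(2*q2)
      = 5*t^2*(1+t)/(t^4+t^3+t^2+t+1) := by
  have hq : t^4+t^3+t^2+t+1 = q1*q2 := by rw [hq1, hq2]; linear_combination (t^2/4) * hr
  have e1 : ((5-r)/4)*((2*t+(1+r)/2)/q1) + r/(2*q1) = (((5-r)/2)*t + r)/q1 := by
    field_simp; linear_combination (-1)*hr
  have e2 : ((5+r)/4)*((2*t+(1-r)/2)/q2) - r/(2*q2) = (((5+r)/2)*t - r)/q2 := by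
    field_simp; linear_combination (-1)*hr
  have e3 : (((5-r)/2)*t + r)/q1 + ((((5+r)/2)*t - r)/q2) = 5*t^2*(1+t)/(q1*q2) := by
    rw [div_add_div _ _ h1.ne' h2.ne']
    congr 1
    rw [hq1, hq2]
    linear_combination (t^2/2 - t)*hr
  calc ((5-r)/4)*((2*t+(1+r)/2)/q1) + ((5+r)/4)*((2*t+(1-r)/2)/q2) + r/(2*q1) - r/(2*q2)
      = (((5-r)/4)*((2*t+(1+r)/2)/q1) + r/(2*q1)) + (((5+r)/4)*((2*t+(1-r)/2)/q2) - r/(2*q2)) := by ring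
    _ = 5*t^2*(1+t)/(t^4+t^3+t^2+t+1) := by rw [e1, e2, e3, hq]

section
open Real
-- trig values
lemma sin_pi_div_five : Real.sin (π/5) = Real.sqrt (10 - 2*Real.sqrt 5) / 4 := by
  have h5 : (0:ℝ) < Real.sqrt 5 := Real.sqrt_pos.2 (by norm_num)
  have hr : Real.sqrt 5 ^ 2 = 5 := Real.sq_sqrt (by norm_num)
  have hsnn : 0 ≤ Real.sin (π/5) :=
    Real.sin_nonneg_of_nonneg_of_le_pi (by positivity) (by nlinarith [pi_pos])
  have hs : Real.sin (π/5) = Real.sqrt (1 - Real.cos (π/5) ^ 2) := by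
    rw [← Real.sqrt_sq hsnn]
    congr 1
    nlinarith [Real.sin_sq_add_cos_sq (π/5)]
  rw [hs, Real.cos_pi_div_five]
  rw [show 1 - ((1+Real.sqrt 5)/4)^2 = (10 - 2*Real.sqrt 5)/16 by nlinarith]
  rw [show (10 - 2*Real.sqrt 5)/16 = (Real.sqrt (10-2*Real.sqrt 5)/4)^2 by
    rw [div_pow, Real.sq_sqrt (by nlinarith)]; norm_num]
  exact Real.sqrt_sq (by positivity)
end

open Real in
lemma cos_two_pi_div_five' : Real.cos (2*π/5) = (Real.sqrt 5 - 1)/4 := by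
  have hr : Real.sqrt 5 ^ 2 = 5 := Real.sq_sqrt (by norm_num)
  have h : (2*π/5) = 2*(π/5) := by ring
  rw [h, Real.cos_two_mul, Real.cos_pi_div_five]
  nlinarith

open Real in
lemma sin_two_pi_div_five' : Real.sin (2*π/5) = Real.sqrt (10 + 2*Real.sqrt 5) / 4 := by
  have hr : Real.sqrt 5 ^ 2 = 5 := Real.sq_sqrt (by norm_num)
  have h5 : (0:ℝ) < Real.sqrt 5 := Real.sqrt_pos.2 (by norm_num)
  have hsnn : 0 ≤ Real.sin (2*π/5) :=
    Real.sin_nonneg_of_nonneg_of_le_pi (by positivity) (by nlinarith [pi_pos])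
  have hs : Real.sin (2*π/5) = Real.sqrt (1 - Real.cos (2*π/5) ^ 2) := by
    rw [← Real.sqrt_sq hsnn]
    congr 1
    nlinarith [Real.sin_sq_add_cos_sq (2*π/5)]
  rw [hs, cos_two_pi_div_five']
  rw [show 1 - ((Real.sqrt 5 - 1)/4)^2 = (10 + 2*Real.sqrt 5)/16 by nlinarith]
  rw [show (10 + 2*Real.sqrt 5)/16 = (Real.sqrt (10+2*Real.sqrt 5)/4)^2 by
    rw [div_pow, Real.sq_sqrt (by nlinarith)]; norm_num]
  exact Real.sqrt_sq (by positivity)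

open Real in
lemma sqrt_prod_eq : Real.sqrt (10 - 2*Real.sqrt 5) * Real.sqrt (10 + 2*Real.sqrt 5) = 4 * Real.sqrt 5 := by
  have hr : Real.sqrt 5 ^ 2 = 5 := Real.sq_sqrt (by norm_num)
  have h5 : (0:ℝ) < Real.sqrt 5 := Real.sqrt_pos.2 (by norm_num)
  rw [← Real.sqrt_mul (by nlinarith)]
  rw [show (10 - 2*Real.sqrt 5)*(10 + 2*Real.sqrt 5) = (4*Real.sqrt 5)^2 by nlinarith]
  exact Real.sqrt_sq (by positivity)

open Real in
lemma arctan1 : Real.arctan ((5+Real.sqrt 5)/Real.sqrt (10 - 2*Real.sqrt 5)) = 2*π/5 := by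
  have hr : Real.sqrt 5 ^ 2 = 5 := Real.sq_sqrt (by norm_num)
  have h5 : (0:ℝ) < Real.sqrt 5 := Real.sqrt_pos.2 (by norm_num)
  have hr2 : 2 < Real.sqrt 5 := by nlinarith
  have hσ1 : (0:ℝ) < Real.sqrt (10 - 2*Real.sqrt 5) := Real.sqrt_pos.2 (by nlinarith)
  rw [← Real.arctan_tan (x := 2*π/5) (by nlinarith [pi_pos]) (by nlinarith [pi_pos])]
  congr 1
  rw [Real.tan_eq_sin_div_cos, sin_two_pi_div_five', cos_two_pi_div_five']
  rw [div_eq_div_iff hσ1.ne' (by nlinarith)]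
  nlinarith [sqrt_prod_eq, Real.sqrt_nonneg (10 + 2*Real.sqrt 5)]

open Real in
lemma arctan2 : Real.arctan ((1+Real.sqrt 5)/Real.sqrt (10 - 2*Real.sqrt 5)) = 3*π/10 := by
  have hr : Real.sqrt 5 ^ 2 = 5 := Real.sq_sqrt (by norm_num)
  have h5 : (0:ℝ) < Real.sqrt 5 := Real.sqrt_pos.2 (by norm_num)
  have hσ1 : (0:ℝ) < Real.sqrt (10 - 2*Real.sqrt 5) := Real.sqrt_pos.2 (by nlinarith)
  rw [← Real.arctan_tan (x := 3*π/10) (by nlinarith [pi_pos]) (by nlinarith [pi_pos])]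
  congr 1
  rw [Real.tan_eq_sin_div_cos, show (3*π/10) = π/2 - π/5 by ring, Real.sin_pi_div_two_sub,
    Real.cos_pi_div_two_sub, Real.cos_pi_div_five, sin_pi_div_five]
  rw [div_eq_div_iff hσ1.ne' (by positivity)]
  ring

open Real in
lemma arctan3 : Real.arctan ((5-Real.sqrt 5)/Real.sqrt (10 + 2*Real.sqrt 5)) = π/5 := by
  have hr : Real.sqrt 5 ^ 2 = 5 := Real.sq_sqrt (by norm_num)
  have h5 : (0:ℝ) < Real.sqrt 5 := Real.sqrt_pos.2 (by norm_num)
  have hσ2 : (0:ℝ) < Real.sqrt (10 + 2*Real.sqrt 5) := Real.sqrt_pos.2 (by nlinarith)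
  rw [← Real.arctan_tan (x := π/5) (by nlinarith [pi_pos]) (by nlinarith [pi_pos])]
  congr 1
  rw [Real.tan_eq_sin_div_cos, Real.cos_pi_div_five, sin_pi_div_five]
  rw [div_eq_div_iff hσ2.ne' (by positivity)]
  nlinarith [sqrt_prod_eq, Real.sqrt_nonneg (10 - 2*Real.sqrt 5)]

open Real in
lemma arctan4 : Real.arctan ((1-Real.sqrt 5)/Real.sqrt (10 + 2*Real.sqrt 5)) = -(π/10) := by
  have hr : Real.sqrt 5 ^ 2 = 5 := Real.sq_sqrt (by norm_num)
  have h5 : (0:ℝ) < Real.sqrt 5 := Real.sqrt_pos.2 (by norm_num)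
  have hr2 : 2 < Real.sqrt 5 := by nlinarith
  have hσ2 : (0:ℝ) < Real.sqrt (10 + 2*Real.sqrt 5) := Real.sqrt_pos.2 (by nlinarith)
  rw [← Real.arctan_tan (x := -(π/10)) (by nlinarith [pi_pos]) (by nlinarith [pi_pos])]
  congr 1
  rw [Real.tan_eq_sin_div_cos, Real.sin_neg, Real.cos_neg,
    show (π/10) = π/2 - 2*π/5 by ring, Real.sin_pi_div_two_sub,
    Real.cos_pi_div_two_sub, cos_two_pi_div_five', sin_two_pi_div_five']
  rw [div_eq_div_iff hσ2.ne' (by positivity)]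
  ring

open Real in
lemma key_sqrt_id : 2*Real.sqrt 5*Real.sqrt (10 + 2*Real.sqrt 5) = (Real.sqrt 5+5)*Real.sqrt (10 - 2*Real.sqrt 5) := by
  have hr : Real.sqrt 5 ^ 2 = 5 := Real.sq_sqrt (by norm_num)
  have h5 : (0:ℝ) < Real.sqrt 5 := Real.sqrt_pos.2 (by norm_num)
  have hσ1sq : Real.sqrt (10 - 2*Real.sqrt 5) ^ 2 = 10 - 2*Real.sqrt 5 := Real.sq_sqrt (by nlinarith)
  have hσ2sq : Real.sqrt (10 + 2*Real.sqrt 5) ^ 2 = 10 + 2*Real.sqrt 5 := Real.sq_sqrt (by nlinarith)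
  have hσ1 : (0:ℝ) ≤ Real.sqrt (10 - 2*Real.sqrt 5) := Real.sqrt_nonneg _
  have hσ2 : (0:ℝ) ≤ Real.sqrt (10 + 2*Real.sqrt 5) := Real.sqrt_nonneg _
  have hsq : (2*Real.sqrt 5*Real.sqrt (10 + 2*Real.sqrt 5))^2 = ((Real.sqrt 5+5)*Real.sqrt (10 - 2*Real.sqrt 5))^2 := by
    linear_combination (4*Real.sqrt 5^2)*hσ2sq - (Real.sqrt 5+5)^2*hσ1sq + (10*Real.sqrt 5+50)*hr
  calc 2*Real.sqrt 5*Real.sqrt (10 + 2*Real.sqrt 5)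
      = Real.sqrt ((2*Real.sqrt 5*Real.sqrt (10 + 2*Real.sqrt 5))^2) := (Real.sqrt_sq (by positivity)).symm
    _ = Real.sqrt (((Real.sqrt 5+5)*Real.sqrt (10 - 2*Real.sqrt 5))^2) := by rw [hsq]
    _ = (Real.sqrt 5+5)*Real.sqrt (10 - 2*Real.sqrt 5) := Real.sqrt_sq (by positivity)

open Real in
lemma pi_part :
    (2*Real.sqrt 5/Real.sqrt (10-2*Real.sqrt 5))*(π/10) - (2*Real.sqrt 5/Real.sqrt (10+2*Real.sqrt 5))*(3*π/10)
      = -(((Real.sqrt 5-1)/Real.sqrt (10+2*Real.sqrt 5))*π/2) := by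
  have hr : Real.sqrt 5 ^ 2 = 5 := Real.sq_sqrt (by norm_num)
  have h5 : (0:ℝ) < Real.sqrt 5 := Real.sqrt_pos.2 (by norm_num)
  have hσ1 : (0:ℝ) < Real.sqrt (10 - 2*Real.sqrt 5) := Real.sqrt_pos.2 (by nlinarith)
  have hσ2 : (0:ℝ) < Real.sqrt (10 + 2*Real.sqrt 5) := Real.sqrt_pos.2 (by nlinarith)
  have h2 := key_sqrt_id
  field_simp
  linear_combination 2 * h2

open Real in
lemma log_part :
    ((5-Real.sqrt 5)/4) * Real.log ((5+Real.sqrt 5)/2) + ((5+Real.sqrt 5)/4) * Real.log ((5-Real.sqrt 5)/2)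
      = Real.log 10 - (1/2)*(Real.sqrt 5 * Real.log ((Real.sqrt 5+1)/2) - Real.log (Real.sqrt 5/4)) := by
  have hr : Real.sqrt 5 ^ 2 = 5 := Real.sq_sqrt (by norm_num)
  have h5 : (0:ℝ) < Real.sqrt 5 := Real.sqrt_pos.2 (by norm_num)
  have hφ : (0:ℝ) < (Real.sqrt 5+1)/2 := by positivity
  have hl1 : Real.log ((5+Real.sqrt 5)/2) = Real.log (Real.sqrt 5) + Real.log ((Real.sqrt 5+1)/2) := by
    rw [← Real.log_mul h5.ne' hφ.ne']
    congr 1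
    linear_combination (-1/2)*hr
  have hl2 : Real.log ((5-Real.sqrt 5)/2) = Real.log (Real.sqrt 5) - Real.log ((Real.sqrt 5+1)/2) := by
    rw [← Real.log_div h5.ne' hφ.ne']
    congr 1
    rw [eq_div_iff hφ.ne']
    linear_combination (-1/4)*hr
  have hl10 : Real.log 10 = Real.log 2 + 2*Real.log (Real.sqrt 5) := by
    rw [show (10:ℝ) = 2*Real.sqrt 5^2 by linear_combination (-2)*hr, Real.log_mul (by norm_num) (by positivity),
      Real.log_pow]
    push_cast; ring
  have hl4 : Real.log (Real.sqrt 5/4) = Real.log (Real.sqrt 5) - 2*Real.log 2 := by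
    rw [Real.log_div h5.ne' (by norm_num), show (4:ℝ) = 2^2 by norm_num, Real.log_pow]
    push_cast; ring
  rw [hl1, hl2, hl10, hl4]
  ring

lemma integral_eval :
    (∫ t in (0:ℝ)..1, 5*t^2*(1+t)/(t^4+t^3+t^2+t+1))
      = Real.log 10 - (1/2)*(Real.sqrt 5 * Real.log ((Real.sqrt 5+1)/2) - Real.log (Real.sqrt 5/4))
        - ((Real.sqrt 5-1)/Real.sqrt (10+2*Real.sqrt 5))*π/2 := by
  have hr : Real.sqrt 5 ^ 2 = 5 := Real.sq_sqrt (by norm_num)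
  have h5 : (0:ℝ) < Real.sqrt 5 := Real.sqrt_pos.2 (by norm_num)
  set r := Real.sqrt 5 with hrdef
  have hr2 : 2 < r := by nlinarith
  have hr3 : r < 3 := by nlinarith
  set σ1 := Real.sqrt (10 - 2*r) with hσ1def
  set σ2 := Real.sqrt (10 + 2*r) with hσ2def
  have hσ1 : (0:ℝ) < σ1 := Real.sqrt_pos.2 (by nlinarith)
  have hσ2 : (0:ℝ) < σ2 := Real.sqrt_pos.2 (by nlinarith)
  have hσ1sq : σ1^2 = 10 - 2*r := Real.sq_sqrt (by nlinarith)
  have hσ2sq : σ2^2 = 10 + 2*r := Real.sq_sqrt (by nlinarith)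
  have hd1 : ((1+r)/2)^2 < 4 := by nlinarith
  have hd2 : ((1-r)/2)^2 < 4 := by nlinarith
  have hss1 : (σ1/2)^2 = 4 - ((1+r)/2)^2 := by
    rw [div_pow, hσ1sq]; linear_combination (1/4)*hr
  have hss2 : (σ2/2)^2 = 4 - ((1-r)/2)^2 := by
    rw [div_pow, hσ2sq]; linear_combination (1/4)*hr
  set F : ℝ → ℝ := fun u => ((5-r)/4) * Real.log (u^2+((1+r)/2)*u+1)
      + ((5+r)/4) * Real.log (u^2+((1-r)/2)*u+1)
      + (r/(σ1/2)) * Real.arctan ((2*u+(1+r)/2)/(σ1/2))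
      - (r/(σ2/2)) * Real.arctan ((2*u+(1-r)/2)/(σ2/2)) with hF
  have hderiv : ∀ t ∈ Set.uIcc (0:ℝ) 1, HasDerivAt F (5*t^2*(1+t)/(t^4+t^3+t^2+t+1)) t := by
    intro t _
    have h1 := (hasDerivAt_logq ((1+r)/2) hd1 t).const_mul ((5-r)/4)
    have h2 := (hasDerivAt_logq ((1-r)/2) hd2 t).const_mul ((5+r)/4)
    have h3 := (hasDerivAt_atq ((1+r)/2) (σ1/2) (by positivity) hss1 t).const_mul (r/(σ1/2))
    have h4 := (hasDerivAt_atq ((1-r)/2) (σ2/2) (by positivity) hss2 t).const_mul (r/(σ2/2))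
    have hsum : HasDerivAt (𝕜 := ℝ) (F := ℝ) _ _ t := ((h1.add h3).add (h2.sub h4))
    have hq1 : (0:ℝ) < t^2+((1+r)/2)*t+1 := quad_pos _ _ hd1
    have hq2 : (0:ℝ) < t^2+((1-r)/2)*t+1 := quad_pos _ _ hd2
    convert hsum using 1
    · funext u; simp only [hF, Pi.add_apply, Pi.sub_apply]; ring
    · rw [← frac_eq t r _ _ hr rfl rfl hq1 hq2]
      have e3 : (r/(σ1/2)) * ((σ1/2)/(2*(t^2+((1+r)/2)*t+1))) = r/(2*(t^2+((1+r)/2)*t+1)) := by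
        rw [div_mul_div_comm, mul_comm r (σ1/2), mul_div_mul_left _ _ (by positivity : (σ1/2) ≠ 0)]
      have e4 : (r/(σ2/2)) * ((σ2/2)/(2*(t^2+((1-r)/2)*t+1))) = r/(2*(t^2+((1-r)/2)*t+1)) := by
        rw [div_mul_div_comm, mul_comm r (σ2/2), mul_div_mul_left _ _ (by positivity : (σ2/2) ≠ 0)]
      rw [e3, e4]; ring
  have hint : IntervalIntegrable (fun t => 5*t^2*(1+t)/(t^4+t^3+t^2+t+1)) MeasureTheory.volume 0 1 := by
    apply ContinuousOn.intervalIntegrable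
    apply ContinuousOn.div (by fun_prop) (by fun_prop)
    intro t ht
    rw [Set.uIcc_of_le (by norm_num : (0:ℝ) ≤ 1)] at ht
    nlinarith [ht.1, ht.2]
  rw [intervalIntegral.integral_eq_sub_of_hasDerivAt hderiv hint]
  have a1 : (2*(1:ℝ)+(1+r)/2)/(σ1/2) = (5+r)/σ1 := by
    rw [div_eq_div_iff (by positivity) hσ1.ne']; ring
  have a2 : (2*(0:ℝ)+(1+r)/2)/(σ1/2) = (1+r)/σ1 := by
    rw [div_eq_div_iff (by positivity) hσ1.ne']; ring
  have a3 : (2*(1:ℝ)+(1-r)/2)/(σ2/2) = (5-r)/σ2 := by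
    rw [div_eq_div_iff (by positivity) hσ2.ne']; ring
  have a4 : (2*(0:ℝ)+(1-r)/2)/(σ2/2) = (1-r)/σ2 := by
    rw [div_eq_div_iff (by positivity) hσ2.ne']; ring
  have b1 : ((1:ℝ)^2+((1+r)/2)*1+1) = (5+r)/2 := by ring
  have b2 : ((1:ℝ)^2+((1-r)/2)*1+1) = (5-r)/2 := by ring
  have b3 : ((0:ℝ)^2+((1+r)/2)*0+1) = 1 := by ring
  have b4 : ((0:ℝ)^2+((1-r)/2)*0+1) = 1 := by ring
  simp only [hF, a1, a2, a3, a4, b1, b2, b3, b4, Real.log_one]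
  rw [arctan1, arctan2, arctan3, arctan4]
  have hdiv1 : r/(σ1/2) = 2*r/σ1 := by ring
  have hdiv2 : r/(σ2/2) = 2*r/σ2 := by ring
  rw [hdiv1, hdiv2]
  have P := pi_part
  have L := log_part
  rw [← hrdef] at P L
  rw [← hσ1def, ← hσ2def] at P
  linear_combination P + L


lemma val_eq (m : ℕ) : (∫ t in (0:ℝ)..1, (5*t^(5*m+2) - 5*t^(5*m+4)))
    = 1/((m:ℝ)+3/5) - 1/((m:ℝ)+1) := by
  rw [intervalIntegral.integral_sub ((intervalIntegral.intervalIntegrable_pow _).const_mul 5)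
      ((intervalIntegral.intervalIntegrable_pow _).const_mul 5),
    intervalIntegral.integral_const_mul, intervalIntegral.integral_const_mul,
    integral_pow, integral_pow]
  have h1 : ((m:ℝ)+3/5) ≠ 0 := by positivity
  have h2 : ((m:ℝ)+1) ≠ 0 := by positivity
  have h3 : ((5*m+2+1 : ℕ):ℝ) ≠ 0 := by positivity
  have h4 : ((5*m+4+1 : ℕ):ℝ) ≠ 0 := by positivity
  field_simp
  push_cast
  ring

lemma summable_aux : Summable (fun m : ℕ => 1/((m:ℝ)+3/5) - 1/((m:ℝ)+1)) := by
  have hs : Summable (fun m : ℕ => 1/((m:ℝ)+1)^2) := by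
    have h := (summable_one_div_nat_pow (p := 2)).mpr (by norm_num)
    have := (summable_nat_add_iff 1).2 h
    apply this.congr
    intro n
    push_cast
    ring
  apply Summable.of_nonneg_of_le _ _ (hs.mul_left (2/3))
  · intro m
    have h1 : (0:ℝ) < (m:ℝ)+3/5 := by positivity
    have h2 : (0:ℝ) < (m:ℝ)+1 := by positivity
    have := one_div_le_one_div_of_le h1 (by linarith : (m:ℝ)+3/5 ≤ (m:ℝ)+1)
    linarith
  · intro m
    have h1 : (0:ℝ) < (m:ℝ)+3/5 := by positivity
    have h2 : (0:ℝ) < (m:ℝ)+1 := by positivity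
    rw [div_sub_div _ _ h1.ne' h2.ne', mul_one_div, div_le_div_iff₀ (by positivity) (by positivity)]
    nlinarith

lemma hasSum_int : HasSum (fun m : ℕ => 1/((m:ℝ)+3/5) - 1/((m:ℝ)+1))
    (∫ t in (0:ℝ)..1, 5*t^2*(1+t)/(t^4+t^3+t^2+t+1)) := by
  set μ := volume.restrict (Set.Ioo (0:ℝ) 1) with hμ
  set G : ℕ → ℝ → ℝ := fun m t => 5*t^(5*m+2)*(1-t^2) with hG
  have hcont : ∀ m, Continuous (G m) := by intro m; fun_prop
  have hInt : ∀ m, Integrable (G m) μ :=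
    fun m => ((hcont m).integrableOn_Icc (a := 0) (b := 1)).mono_set Set.Ioo_subset_Icc_self
  have hval : ∀ m, (∫ t, G m t ∂μ) = 1/((m:ℝ)+3/5) - 1/((m:ℝ)+1) := by
    intro m
    rw [← val_eq m, intervalIntegral.integral_of_le (by norm_num), integral_Ioc_eq_integral_Ioo]
    apply setIntegral_congr_fun measurableSet_Ioo
    intro t _
    simp only [hG]
    ring
  have hnonneg : ∀ m, ∀ t ∈ Set.Ioo (0:ℝ) 1, 0 ≤ G m t := by
    intro m t ht
    have h1 := ht.1; have h2 := ht.2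
    simp only [hG]
    have h3 : t^2 ≤ 1 := by nlinarith
    have h4 : (0:ℝ) ≤ t^(5*m+2) := by positivity
    nlinarith
  have hnorm : ∀ m, (∫ t, ‖G m t‖ ∂μ) = 1/((m:ℝ)+3/5) - 1/((m:ℝ)+1) := by
    intro m
    rw [← hval m]
    apply integral_congr_ae
    filter_upwards [ae_restrict_mem measurableSet_Ioo] with t ht
    exact Real.norm_of_nonneg (hnonneg m t ht)
  have hsum2 : Summable fun m => ∫ t, ‖G m t‖ ∂μ := by
    rw [funext hnorm]; exact summable_aux
  have H : HasSum (fun m => ∫ t, G m t ∂μ) (∫ t, ∑' m, G m t ∂μ) :=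
    hasSum_integral_of_summable_integral_norm hInt hsum2
  rw [funext hval] at H
  convert H using 1
  rw [intervalIntegral.integral_of_le (by norm_num), integral_Ioc_eq_integral_Ioo]
  apply setIntegral_congr_fun measurableSet_Ioo
  intro t ht
  have ht5 : t^5 < 1 := pow_lt_one₀ ht.1.le ht.2 (by norm_num)
  have h15 : (0:ℝ) < 1 - t^5 := by linarith
  have hq : (0:ℝ) < t^4+t^3+t^2+t+1 := by nlinarith [ht.1, sq_nonneg t, sq_nonneg (t^2)]
  have hgeo : ∑' m : ℕ, G m t = (5*t^2*(1-t^2)) * (1-t^5)⁻¹ := by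
    rw [show (fun m : ℕ => G m t) = fun m : ℕ => (5*t^2*(1-t^2)) * (t^5)^m by
      funext m; simp only [hG]; rw [← pow_mul, pow_add]; ring]
    rw [tsum_mul_left, tsum_geometric_of_lt_one (pow_nonneg ht.1.le 5) ht5]
  show 5*t^2*(1+t)/(t^4+t^3+t^2+t+1) = ∑' m : ℕ, G m t
  rw [hgeo]
  rw [eq_mul_inv_iff_mul_eq₀ h15.ne', div_mul_eq_mul_div, div_eq_iff hq.ne']
  ring


lemma hasSum_tele : HasSum (fun m : ℕ => 1/((m:ℝ)+3/5) - 1/((m:ℝ)+8/5)) (5/3) := by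
  have hnn : ∀ m : ℕ, 0 ≤ 1/((m:ℝ)+3/5) - 1/((m:ℝ)+8/5) := by
    intro m
    have h1 : (0:ℝ) < (m:ℝ)+3/5 := by positivity
    have := one_div_le_one_div_of_le h1 (by linarith : (m:ℝ)+3/5 ≤ (m:ℝ)+8/5)
    linarith
  rw [hasSum_iff_tendsto_nat_of_nonneg hnn]
  have hfun : ∀ n : ℕ, (∑ m ∈ Finset.range n, (1/((m:ℝ)+3/5) - 1/((m:ℝ)+8/5)))
      = 5/3 - 1/((n:ℝ)+3/5) := by
    intro n
    have := Finset.sum_range_sub' (f := fun m : ℕ => 1/((m:ℝ)+3/5)) n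
    rw [show (5:ℝ)/3 - 1/((n:ℝ)+3/5) = 1/(((0:ℕ):ℝ)+3/5) - 1/((n:ℝ)+3/5) by norm_num, ← this]
    apply Finset.sum_congr rfl
    intro m _
    push_cast
    norm_num
    ring
  simp only [hfun]
  have h0 : Filter.Tendsto (fun n : ℕ => 1/((n:ℝ)+3/5)) Filter.atTop (nhds 0) := by
    simp only [one_div]
    apply Filter.Tendsto.comp tendsto_inv_atTop_zero
    apply Filter.tendsto_atTop_add_const_right
    exact tendsto_natCast_atTop_atTop
  have := Filter.Tendsto.sub (tendsto_const_nhds (x := (5/3:ℝ))) h0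
  simpa using this


theorem stmt_10 :
    (∑' m : ℕ, (8/5 : ℝ) / ((m + 1) * (m + (8/5 : ℝ)))) = (8/3) * (5/3 - Real.log 10 + ((Real.sqrt 5 - 1) / Real.sqrt (10 + 2 * Real.sqrt 5)) * Real.pi / 2 + (1/2) * (Real.sqrt 5 * Real.log ((Real.sqrt 5 + 1) / 2) - Real.log (Real.sqrt 5 / 4))) := by
  have hg : HasSum (fun m : ℕ => 1/((m:ℝ)+1) - 1/((m:ℝ)+8/5))
      (5/3 - ∫ t in (0:ℝ)..1, 5*t^2*(1+t)/(t^4+t^3+t^2+t+1)) := by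
    have h := hasSum_tele.sub hasSum_int
    have hfun : (fun m : ℕ => (1/((m:ℝ)+3/5) - 1/((m:ℝ)+8/5)) - (1/((m:ℝ)+3/5) - 1/((m:ℝ)+1)))
        = fun m : ℕ => 1/((m:ℝ)+1) - 1/((m:ℝ)+8/5) := by funext m; ring
    rwa [hfun] at h
  have hf : HasSum (fun m : ℕ => (8/5:ℝ)/(((m:ℝ)+1)*((m:ℝ)+8/5)))
      ((8/3)*(5/3 - ∫ t in (0:ℝ)..1, 5*t^2*(1+t)/(t^4+t^3+t^2+t+1))) := by
    have h := hg.mul_left (8/3)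
    have hfun : (fun m : ℕ => (8/3:ℝ)*(1/((m:ℝ)+1) - 1/((m:ℝ)+8/5)))
        = fun m : ℕ => (8/5:ℝ)/(((m:ℝ)+1)*((m:ℝ)+8/5)) := by
      funext m
      have h1 : ((m:ℝ)+1) ≠ 0 := by positivity
      have h2 : ((m:ℝ)+8/5) ≠ 0 := by positivity
      field_simp
      ring
    rwa [hfun] at h
  rw [hf.tsum_eq, integral_eval]
  ring
end

section
/- The series ∑_{m=0}^∞ a/((m+1)(m+a)) with a = 9/5 equals (9/4)·(5/4 − log 10 + ((√5+1)/√(10−2√5))·π/2 + (1/2)·(√5·log((√5−1)/2) − log(√5/4))). -/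
open Real Filter Topology intervalIntegral Finset


noncomputable def FFgen (a s1 s2 : ℝ) : ℝ → ℝ := fun u =>
  5/4*u^4 - (5+a)/4 * Real.log (u^2+(1+a)/2*u+1)
          - (5-a)/4 * Real.log (u^2+(1-a)/2*u+1)
  + s1 * Real.arctan ((2*u+(1+a)/2)/s1) + s2 * Real.arctan ((2*u+(1-a)/2)/s2)


noncomputable def gg : ℝ → ℝ := fun u => 5*(u^7+u^6+u^5+u^4)/(u^4+u^3+u^2+u+1)

lemma P_pos (u : ℝ) : 0 < u^4+u^3+u^2+u+1 := by
  nlinarith [sq_nonneg (2*u^2+u), sq_nonneg (u+2/3), sq_nonneg u]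

lemma deriv_aux (a s1 s2 : ℝ) (ha : a^2 = 5) (hs1 : s1^2 = (5-a)/2) (hs2 : s2^2 = (5+a)/2)
    (hs1p : 0 < s1) (hs2p : 0 < s2) (u : ℝ) :
    HasDerivAt (fun u => 5/4*u^4 - (5+a)/4 * Real.log (u^2+(1+a)/2*u+1)
      - (5-a)/4 * Real.log (u^2+(1-a)/2*u+1)
      + s1 * Real.arctan ((2*u+(1+a)/2)/s1) + s2 * Real.arctan ((2*u+(1-a)/2)/s2))
      (gg u) u := by
  have ha5 : a < 5 := by nlinarith [hs1, sq_nonneg s1, hs1p]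
  have ha5' : -5 < a := by nlinarith [hs2, sq_nonneg s2, hs2p]
  have hq1 : 0 < u^2+(1+a)/2*u+1 := by nlinarith [sq_nonneg (2*u+(1+a)/2)]
  have hq2 : 0 < u^2+(1-a)/2*u+1 := by nlinarith [sq_nonneg (2*u+(1-a)/2)]
  have hp := P_pos u
  have hQ1d : HasDerivAt (fun u : ℝ => u^2+(1+a)/2*u+1) (2*u+(1+a)/2) u := by
    have := ((hasDerivAt_pow 2 u).add ((hasDerivAt_id u).const_mul ((1+a)/2))).add_const 1
    exact this.congr_deriv (by ring)
  have hQ2d : HasDerivAt (fun u : ℝ => u^2+(1-a)/2*u+1) (2*u+(1-a)/2) u := by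
    have := ((hasDerivAt_pow 2 u).add ((hasDerivAt_id u).const_mul ((1-a)/2))).add_const 1
    exact this.congr_deriv (by ring)
  have hlog1 : HasDerivAt (fun u : ℝ => Real.log (u^2+(1+a)/2*u+1))
      ((2*u+(1+a)/2)/(u^2+(1+a)/2*u+1)) u := by
    have := (Real.hasDerivAt_log hq1.ne').comp u hQ1d
    exact this.congr_deriv (div_eq_inv_mul _ _).symm
  have hlog2 : HasDerivAt (fun u : ℝ => Real.log (u^2+(1-a)/2*u+1))
      ((2*u+(1-a)/2)/(u^2+(1-a)/2*u+1)) u := by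
    have := (Real.hasDerivAt_log hq2.ne').comp u hQ2d
    exact this.congr_deriv (div_eq_inv_mul _ _).symm
  have hlin1 : HasDerivAt (fun u : ℝ => (2*u+(1+a)/2)/s1) (2/s1) u := by
    have := (((hasDerivAt_id u).const_mul 2).add_const ((1+a)/2)).div_const s1
    exact this.congr_deriv (by ring)
  have hlin2 : HasDerivAt (fun u : ℝ => (2*u+(1-a)/2)/s2) (2/s2) u := by
    have := (((hasDerivAt_id u).const_mul 2).add_const ((1-a)/2)).div_const s2
    exact this.congr_deriv (by ring)
  have harc1 : HasDerivAt (fun u : ℝ => Real.arctan ((2*u+(1+a)/2)/s1))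
      ((1/(1+((2*u+(1+a)/2)/s1)^2)) * (2/s1)) u :=
    (Real.hasDerivAt_arctan _).comp u hlin1
  have harc2 : HasDerivAt (fun u : ℝ => Real.arctan ((2*u+(1-a)/2)/s2))
      ((1/(1+((2*u+(1-a)/2)/s2)^2)) * (2/s2)) u :=
    (Real.hasDerivAt_arctan _).comp u hlin2
  have hpow : HasDerivAt (fun u : ℝ => 5/4*u^4) (5*u^3) u := by
    have := (hasDerivAt_pow 4 u).const_mul ((5:ℝ)/4)
    exact this.congr_deriv (by push_cast; ring)
  have hF := ((((hpow.sub (hlog1.const_mul ((5+a)/4))).sub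
      (hlog2.const_mul ((5-a)/4))).add (harc1.const_mul s1)).add (harc2.const_mul s2))
  refine hF.congr_deriv (Eq.symm ?_)
  have e1 : s1 * ((1/(1+((2*u+(1+a)/2)/s1)^2)) * (2/s1)) = ((5-a) : ℝ)/(4*(u^2+(1+a)/2*u+1)) := by
    have h4 : (5-a)/2+(2*u+(1+a)/2)^2 = 4*(u^2+(1+a)/2*u+1) := by linear_combination ha/4
    have step : s1 * ((1/(1+((2*u+(1+a)/2)/s1)^2)) * (2/s1)) = 2*s1^2/(s1^2+(2*u+(1+a)/2)^2) := by
      rw [div_pow]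
      rw [show 1+(2*u+(1+a)/2)^2/s1^2 = (s1^2+(2*u+(1+a)/2)^2)/s1^2 by
        field_simp]
      field_simp
    rw [step, hs1, h4]
    rw [div_eq_div_iff (by positivity) (by positivity)]
    ring
  have e2 : s2 * ((1/(1+((2*u+(1-a)/2)/s2)^2)) * (2/s2)) = ((5+a) : ℝ)/(4*(u^2+(1-a)/2*u+1)) := by
    have h4 : (5+a)/2+(2*u+(1-a)/2)^2 = 4*(u^2+(1-a)/2*u+1) := by linear_combination ha/4
    have step : s2 * ((1/(1+((2*u+(1-a)/2)/s2)^2)) * (2/s2)) = 2*s2^2/(s2^2+(2*u+(1-a)/2)^2) := by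
      rw [div_pow]
      rw [show 1+(2*u+(1-a)/2)^2/s2^2 = (s2^2+(2*u+(1-a)/2)^2)/s2^2 by
        field_simp]
      field_simp
    rw [step, hs2, h4]
    rw [div_eq_div_iff (by positivity) (by positivity)]
    ring
  rw [e1, e2]
  have e3 : (5+a)/4 * ((2*u+(1+a)/2)/(u^2+(1+a)/2*u+1))
      = ((5+a)*(2*u+(1+a)/2))/(4*(u^2+(1+a)/2*u+1)) := div_mul_div_comm _ _ _ _
  have e4 : (5-a)/4 * ((2*u+(1-a)/2)/(u^2+(1-a)/2*u+1))
      = ((5-a)*(2*u+(1-a)/2))/(4*(u^2+(1-a)/2*u+1)) := div_mul_div_comm _ _ _ _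
  rw [e3, e4]
  have hPQ : (u^2+(1+a)/2*u+1)*(u^2+(1-a)/2*u+1) = u^4+u^3+u^2+u+1 := by
    linear_combination (-(u^2)/4) * ha
  have key : ((5-a) - (5+a)*(2*u+(1+a)/2)) * (u^2+(1-a)/2*u+1)
      + ((5+a) - (5-a)*(2*u+(1-a)/2)) * (u^2+(1+a)/2*u+1) = -20*u^3 := by
    linear_combination (u^2 + 7/2*u - 1) * ha
  have sum2 : ((5-a) - (5+a)*(2*u+(1+a)/2))/(4*(u^2+(1+a)/2*u+1))
      + ((5+a) - (5-a)*(2*u+(1-a)/2))/(4*(u^2+(1-a)/2*u+1))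
      = (-5*u^3)/(u^4+u^3+u^2+u+1) := by
    rw [div_add_div _ _ (by positivity) (by positivity),
        div_eq_div_iff (by positivity) hp.ne']
    linear_combination (4*(u^4+u^3+u^2+u+1)) * key + 80*u^3 * hPQ
  calc gg u = 5*u^3 + ((-5*u^3)/(u^4+u^3+u^2+u+1)) := by
        simp only [gg]
        rw [add_div' _ _ _ hp.ne', div_eq_div_iff hp.ne' hp.ne']
        ring
    _ = 5*u^3 + (((5-a) - (5+a)*(2*u+(1+a)/2))/(4*(u^2+(1+a)/2*u+1))
      + ((5+a) - (5-a)*(2*u+(1-a)/2))/(4*(u^2+(1-a)/2*u+1))) := by rw [sum2]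
    _ = _ := by ring


lemma gg_cont : Continuous gg := by
  apply Continuous.div (by continuity) (by continuity)
  intro u; exact (P_pos u).ne'

noncomputable def ff : ℕ → ℝ := fun m => 1/((m:ℝ)+1) - 5/(5*(m:ℝ)+9)

lemma ff_nonneg (m : ℕ) : 0 ≤ ff m := by
  have h1 : (0:ℝ) < (m:ℝ)+1 := by positivity
  have h2 : (0:ℝ) < 5*(m:ℝ)+9 := by positivity
  rw [ff, sub_nonneg, div_le_div_iff₀ h2 h1]
  nlinarith [Nat.cast_nonneg (α := ℝ) m]

lemma ff_integral (m : ℕ) : ∫ u in (0:ℝ)..1, gg u * (u^(5*m) - u^(5*m+5)) = ff m := by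
  have hfun : (fun u:ℝ => gg u * (u^(5*m) - u^(5*m+5)))
      = fun u => 5*u^(5*m+4) - 5*u^(5*m+8) := by
    funext u
    simp only [gg]
    rw [div_mul_eq_mul_div, div_eq_iff (P_pos u).ne']
    ring
  rw [hfun]
  have i1 : IntervalIntegrable (fun u:ℝ => 5*u^(5*m+4)) MeasureTheory.volume 0 1 :=
    (Continuous.intervalIntegrable (by continuity) _ _)
  have i2 : IntervalIntegrable (fun u:ℝ => 5*u^(5*m+8)) MeasureTheory.volume 0 1 :=
    (Continuous.intervalIntegrable (by continuity) _ _)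
  rw [intervalIntegral.integral_sub i1 i2, intervalIntegral.integral_const_mul,
      intervalIntegral.integral_const_mul, integral_pow, integral_pow]
  rw [ff]
  push_cast
  rw [one_pow, zero_pow (by positivity), zero_pow (by positivity)]
  have h1 : ((m:ℝ)+1) ≠ 0 := by positivity
  have h2 : (5*(m:ℝ)+9) ≠ 0 := by positivity
  have h3 : (5*(m:ℝ)+4+1) ≠ 0 := by positivity
  have h4 : (5*(m:ℝ)+8+1) ≠ 0 := by positivity
  field_simp
  ring

lemma partial_sum (N : ℕ) :
    ∑ m ∈ range N, ff m = ∫ u in (0:ℝ)..1, gg u * (1 - u^(5*N)) := by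
  have : ∀ m ∈ range N, ff m = ∫ u in (0:ℝ)..1, gg u * (u^(5*m) - u^(5*m+5)) :=
    fun m _ => (ff_integral m).symm
  rw [Finset.sum_congr rfl this, ← intervalIntegral.integral_finset_sum]
  · apply intervalIntegral.integral_congr
    intro u _
    dsimp only
    rw [← Finset.mul_sum]
    congr 1
    have : ∀ m ∈ range N, u^(5*m) - u^(5*m+5) = u^(5*m) - u^(5*(m+1)) := by
      intro m _; rw [show 5*(m+1) = 5*m+5 by ring]
    rw [Finset.sum_congr rfl this, Finset.sum_range_sub' (fun m => u^(5*m))]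
    norm_num
  · intro m _
    exact Continuous.intervalIntegrable
      (gg_cont.mul ((continuous_pow _).sub (continuous_pow _))) _ _
lemma gg_le (u : ℝ) (hu : u ∈ Set.Icc (0:ℝ) 1) : gg u ≤ 20 := by
  obtain ⟨h0, h1⟩ := hu
  rw [gg, div_le_iff₀ (P_pos u)]
  have e7 : u^7 ≤ 1 := pow_le_one₀ h0 h1
  have e6 : u^6 ≤ 1 := pow_le_one₀ h0 h1
  have e5 : u^5 ≤ 1 := pow_le_one₀ h0 h1
  have e4 : u^4 ≤ 1 := pow_le_one₀ h0 h1
  nlinarith [pow_nonneg h0 2, pow_nonneg h0 3, pow_nonneg h0 4]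

lemma gg_nonneg (u : ℝ) (hu : u ∈ Set.Icc (0:ℝ) 1) : 0 ≤ gg u := by
  obtain ⟨h0, _⟩ := hu
  rw [gg]
  positivity

lemma tendsto_partial :
    Tendsto (fun N => ∑ m ∈ range N, ff m) atTop (𝓝 (∫ u in (0:ℝ)..1, gg u)) := by
  have hsplit : ∀ N : ℕ, ∑ m ∈ range N, ff m
      = (∫ u in (0:ℝ)..1, gg u) - ∫ u in (0:ℝ)..1, gg u * u^(5*N) := by
    intro N
    rw [partial_sum N]
    rw [show (fun u:ℝ => gg u * (1 - u^(5*N))) = fun u => gg u - gg u * u^(5*N) by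
      funext u; ring]
    rw [intervalIntegral.integral_sub (gg_cont.intervalIntegrable _ _)
      (Continuous.intervalIntegrable (by exact gg_cont.mul (continuous_pow _)) _ _)]
  simp only [hsplit]
  have hJ0 : ∀ N : ℕ, 0 ≤ ∫ u in (0:ℝ)..1, gg u * u^(5*N) := by
    intro N
    apply intervalIntegral.integral_nonneg (by norm_num)
    intro u hu
    exact mul_nonneg (gg_nonneg u hu) (pow_nonneg hu.1 _)
  have hJle : ∀ N : ℕ, (∫ u in (0:ℝ)..1, gg u * u^(5*N)) ≤ 20/(5*(N:ℝ)+1) := by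
    intro N
    have : (∫ u in (0:ℝ)..1, gg u * u^(5*N)) ≤ ∫ u in (0:ℝ)..1, 20 * u^(5*N) := by
      apply intervalIntegral.integral_mono_on (by norm_num)
        (Continuous.intervalIntegrable (by exact gg_cont.mul (continuous_pow _)) _ _)
        (Continuous.intervalIntegrable (by continuity) _ _)
      intro u hu
      exact mul_le_mul_of_nonneg_right (gg_le u hu) (pow_nonneg hu.1 _)
    refine this.trans ?_
    rw [intervalIntegral.integral_const_mul, integral_pow]
    push_cast
    rw [one_pow, zero_pow (by positivity)]
    norm_num
    rw [div_eq_mul_inv]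
  have hJtend : Tendsto (fun N : ℕ => ∫ u in (0:ℝ)..1, gg u * u^(5*N)) atTop (𝓝 0) := by
    apply squeeze_zero hJ0 hJle
    have h1 : Tendsto (fun N : ℕ => 5*(N:ℝ)+1) atTop atTop := by
      apply Filter.tendsto_atTop_add_const_right
      exact (tendsto_natCast_atTop_atTop).const_mul_atTop (by norm_num)
    simpa using (tendsto_const_nhds (x := (20:ℝ))).div_atTop h1
  simpa using (tendsto_const_nhds (x := ∫ u in (0:ℝ)..1, gg u)).sub hJtend

lemma hasSum_ff : HasSum ff (∫ u in (0:ℝ)..1, gg u) :=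
  (hasSum_iff_tendsto_nat_of_nonneg ff_nonneg _).2 tendsto_partial

lemma eval_aux (a s1 s2 : ℝ) (ha : a^2 = 5) (ha1 : 1 < a)
    (hs1 : s1^2 = (5-a)/2) (hs2 : s2^2 = (5+a)/2) (hs1p : 0 < s1) (hs2p : 0 < s2)
    (hs1s2 : s1*s2 = a) (hcos : Real.cos (π/5) = (1+a)/4) :
    FFgen a s1 s2 1 - FFgen a s1 s2 0
      = 5/4 - Real.log 10 + ((a+1)/Real.sqrt (10-2*a)) * π / 2
        + 1/2*(a*Real.log ((a-1)/2) - Real.log (a/4)) := by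
  have hpi := Real.pi_pos
  have ha0 : (0:ℝ) < a := by linarith
  have ha5 : a < 5 := by nlinarith
  have hsin : Real.sin (π/5) = s1/2 := by
    rw [Real.sin_eq_sqrt_one_sub_cos_sq (by linarith) (by linarith), hcos]
    rw [show 1 - ((1+a)/4)^2 = (s1/2)^2 by linear_combination (-1/4)*hs1 + (-1/16)*ha]
    exact Real.sqrt_sq (by positivity)
  have hcos2 : Real.cos (2*π/5) = (a-1)/4 := by
    rw [show 2*π/5 = 2*(π/5) by ring, Real.cos_two_mul, hcos]
    linear_combination ha/8
  have hsin2 : Real.sin (2*π/5) = s2/2 := by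
    rw [Real.sin_eq_sqrt_one_sub_cos_sq (by linarith) (by linarith), hcos2]
    rw [show 1 - ((a-1)/4)^2 = (s2/2)^2 by linear_combination (-1/4)*hs2 + (-1/16)*ha]
    exact Real.sqrt_sq (by positivity)
  have htan1 : Real.tan (π/5) = 2*s1/(1+a) := by
    rw [Real.tan_eq_sin_div_cos, hsin, hcos,
      div_eq_div_iff (show ((1+a)/4 : ℝ) ≠ 0 by positivity) (show ((1+a) : ℝ) ≠ 0 by positivity)]
    ring
  have htan2 : Real.tan (2*π/5) = 2*s2/(a-1) := by
    rw [Real.tan_eq_sin_div_cos, hsin2, hcos2,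
      div_eq_div_iff (show ((a-1)/4 : ℝ) ≠ 0 by
        have : (0:ℝ) < (a-1)/4 := by linarith
        exact this.ne') (show ((a-1) : ℝ) ≠ 0 by
        have : (0:ℝ) < a-1 := by linarith
        exact this.ne')]
    ring
  have hA1 : Real.arctan (2*s1/(1+a)) = π/5 := by
    rw [← htan1, Real.arctan_tan (by linarith) (by linarith)]
  have hA2 : Real.arctan (2*s2/(a-1)) = 2*π/5 := by
    rw [← htan2, Real.arctan_tan (by linarith) (by linarith)]
  have V3 : Real.arctan (((5-a)/2)/s2) = π/5 := by
    rw [show ((5-a)/2)/s2 = 2*s1/(1+a) by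
      rw [div_eq_div_iff hs2p.ne' (by positivity : (0:ℝ) < 1+a).ne']
      linear_combination (-1/2)*ha + (-2)*hs1s2]
    exact hA1
  have V1 : Real.arctan (((5+a)/2)/s1) = 2*π/5 := by
    rw [show ((5+a)/2)/s1 = 2*s2/(a-1) by
      rw [div_eq_div_iff hs1p.ne' (by linarith : (0:ℝ) < a-1).ne']
      linear_combination (1/2)*ha + (-2)*hs1s2]
    exact hA2
  have V2 : Real.arctan (((1+a)/2)/s1) = π/2 - π/5 := by
    have hx : (0:ℝ) < 2*s1/(1+a) := by positivity
    have h := Real.arctan_inv_of_pos hx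
    rw [show (2*s1/(1+a))⁻¹ = ((1+a)/2)/s1 by rw [inv_div]; ring] at h
    rw [h, hA1]
  have V4 : Real.arctan (((1-a)/2)/s2) = -(π/2 - 2*π/5) := by
    have hx : (0:ℝ) < 2*s2/(a-1) := by
      apply div_pos (by linarith) (by linarith)
    have h := Real.arctan_inv_of_pos hx
    rw [show (2*s2/(a-1))⁻¹ = ((a-1)/2)/s2 by rw [inv_div]; ring] at h
    rw [show ((1-a)/2)/s2 = -(((a-1)/2)/s2) by ring, Real.arctan_neg, h, hA2]
  have hne1 : ((1+a)/2 : ℝ) ≠ 0 := by positivity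
  have hne2 : ((a-1)/2 : ℝ) ≠ 0 := by
    have : (0:ℝ) < (a-1)/2 := by linarith
    exact this.ne'
  simp only [FFgen]
  rw [show (1:ℝ)^2+(1+a)/2*1+1 = a*((1+a)/2) by linear_combination (-1/2)*ha]
  rw [show (1:ℝ)^2+(1-a)/2*1+1 = a*((a-1)/2) by linear_combination (-1/2)*ha]
  rw [show (0:ℝ)^2+(1+a)/2*0+1 = 1 by ring, show (0:ℝ)^2+(1-a)/2*0+1 = 1 by ring,
      Real.log_one]
  rw [show (2*(1:ℝ)+(1+a)/2)/s1 = ((5+a)/2)/s1 by ring,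
      show (2*(1:ℝ)+(1-a)/2)/s2 = ((5-a)/2)/s2 by ring,
      show (2*(0:ℝ)+(1+a)/2)/s1 = ((1+a)/2)/s1 by ring,
      show (2*(0:ℝ)+(1-a)/2)/s2 = ((1-a)/2)/s2 by ring]
  rw [V1, V2, V3, V4]
  rw [Real.log_mul ha0.ne' hne1, Real.log_mul ha0.ne' hne2]
  rw [show (1+a)/2 = ((a-1)/2)⁻¹ from (inv_eq_of_mul_eq_one_right (by linear_combination ha/4)).symm,
      Real.log_inv]
  rw [show (10:ℝ)-2*a = (2*s1)^2 by rw [mul_pow, hs1]; ring,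
      Real.sqrt_sq (by positivity)]
  rw [show (10:ℝ) = 2*a^2 by linear_combination (-2)*ha,
      Real.log_mul (by norm_num) (by positivity), Real.log_pow]
  rw [Real.log_div ha0.ne' (by norm_num : (4:ℝ) ≠ 0),
      show (4:ℝ) = 2^2 by norm_num, Real.log_pow]
  rw [show (a+1)/(2*s1) = s1/5 + 3*s2/5 by
      rw [div_eq_iff (by positivity : (2*s1 : ℝ) ≠ 0)]
      linear_combination (-2/5)*hs1 + (-6/5)*hs1s2]
  push_cast
  ring

lemma sqrt5_sq : Real.sqrt 5 ^ 2 = 5 := Real.sq_sqrt (by norm_num)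
lemma sqrt5_gt : 2 < Real.sqrt 5 := by nlinarith [sqrt5_sq, Real.sqrt_nonneg 5]
lemma sqrt5_lt : Real.sqrt 5 < 3 := by nlinarith [sqrt5_sq, Real.sqrt_nonneg 5]
lemma s1v_sq : Real.sqrt ((5-Real.sqrt 5)/2) ^ 2 = (5-Real.sqrt 5)/2 :=
  Real.sq_sqrt (by nlinarith [sqrt5_lt])
lemma s2v_sq : Real.sqrt ((5+Real.sqrt 5)/2) ^ 2 = (5+Real.sqrt 5)/2 :=
  Real.sq_sqrt (by nlinarith [sqrt5_gt])
lemma s1v_pos : 0 < Real.sqrt ((5-Real.sqrt 5)/2) := Real.sqrt_pos.2 (by nlinarith [sqrt5_lt])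
lemma s2v_pos : 0 < Real.sqrt ((5+Real.sqrt 5)/2) := Real.sqrt_pos.2 (by nlinarith [sqrt5_gt])

lemma s1s2v : Real.sqrt ((5-Real.sqrt 5)/2) * Real.sqrt ((5+Real.sqrt 5)/2) = Real.sqrt 5 := by
  rw [← Real.sqrt_mul (by nlinarith [sqrt5_lt] : (0:ℝ) ≤ (5-Real.sqrt 5)/2)]
  congr 1
  linear_combination (-1/4)*sqrt5_sq

lemma integral_gg : ∫ u in (0:ℝ)..1, gg u
    = FFgen (Real.sqrt 5) (Real.sqrt ((5-Real.sqrt 5)/2)) (Real.sqrt ((5+Real.sqrt 5)/2)) 1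
    - FFgen (Real.sqrt 5) (Real.sqrt ((5-Real.sqrt 5)/2)) (Real.sqrt ((5+Real.sqrt 5)/2)) 0 := by
  apply intervalIntegral.integral_eq_sub_of_hasDerivAt
  · intro u _
    exact deriv_aux _ _ _ sqrt5_sq s1v_sq s2v_sq s1v_pos s2v_pos u
  · exact gg_cont.intervalIntegrable _ _

theorem stmt_11 :
    (∑' m : ℕ, (9/5 : ℝ) / ((m + 1) * (m + (9/5 : ℝ)))) = (9/4) * (5/4 - Real.log 10 + ((Real.sqrt 5 + 1) / Real.sqrt (10 - 2 * Real.sqrt 5)) * Real.pi / 2 + (1/2) * (Real.sqrt 5 * Real.log ((Real.sqrt 5 - 1) / 2) - Real.log (Real.sqrt 5 / 4))) := by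
  have hterm : ∀ m : ℕ, (9/5 : ℝ) / ((m + 1) * (m + (9/5 : ℝ))) = (9/4) * ff m := by
    intro m
    rw [ff]
    have h1 : ((m:ℝ)+1) ≠ 0 := by positivity
    have h2 : ((m:ℝ)+9/5) ≠ 0 := by positivity
    have h3 : (5*(m:ℝ)+9) ≠ 0 := by positivity
    field_simp
    ring
  rw [tsum_congr hterm, tsum_mul_left, hasSum_ff.tsum_eq, integral_gg,
    eval_aux _ _ _ sqrt5_sq (by linarith [sqrt5_gt]) s1v_sq s2v_sq s1v_pos s2v_pos s1s2v
      Real.cos_pi_div_five]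
end
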